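/- Let (D, h) be a Latvian game (h v ≥ 2 for all v) on a finite loopless digraph with at least two vertices, and let ℓ be a directionless leaf whose unique neighbor is u. Then: (i) if h ℓ ≥ 3, the vertex ℓ is deletable; (ii) if h ℓ = 2 and h u = 2, the game is winnable; (iii) if h ℓ = 2 and h u ≥ 3, the game is winnable if and only if the Latvian game on the restriction of D to V \ {ℓ}, with the hatness of u replaced by ⌈h u / 2⌉, is winnable. -/

import Mathlib

/-!
Putting a vertex back into a game never hurts: it can guess anything. Conversely, if `h ℓ ≥ 3`,
fix the hats of all vertices but `ℓ`; only `u` sees `ℓ`. Since `u` makes one guess, at most one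
hat `t` of `u` is guessed by `u` for all but at most one hat of `ℓ`; without `ℓ`, `u` guesses that
`t`. If nobody then wins, the true hat of `u` is guessed for at most `h ℓ - 2` hats of `ℓ`, and one
of the remaining hats of `ℓ` also escapes the single guess of `ℓ`, which does not depend on the
hat of `ℓ`: a coloring on which the original strategy loses.

If `h ℓ = 2`, `ℓ` guesses the parity of the hat of `u`; then `u`, who sees the hat of `ℓ`, only
has to get `⌊c u / 2⌋` right, which is the game with hatness `⌈h u / 2⌉` at `u`. Conversely, `ℓ`
guesses some colour `ε` for at least `⌈h u / 2⌉` hats of `u`; letting `u` wear only those and `ℓ`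
the other colour, `ℓ` always loses, so the others win the reduced game. When `h u = 2` the reduced
hatness of `u` is `1`, and `u` always wins.
-/

/-- A Czech hat game on the digraph with adjacency `D` (sage `v` sees sage `u`
iff `D v u`), guessness `g`, and hatness `h`, is winnable: there is a strategy
assigning to each sage `v` a set of `g v` guesses, depending only on the hats
she sees, such that for every coloring some sage guesses her own hat color. -/
def HatGame.Winnable {V : Type*} (D : V → V → Prop) (g h : V → ℕ) : Prop :=
  ∃ F : ∀ v : V, (∀ u : V, Fin (h u)) → Finset (Fin (h v)),
    (∀ (v : V) (c c' : ∀ u : V, Fin (h u)),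
        (∀ u : V, D v u → c u = c' u) → F v c = F v c') ∧
    (∀ (v : V) (c : ∀ u : V, Fin (h u)), (F v c).card = g v) ∧
    (∀ c : ∀ u : V, Fin (h u), ∃ v : V, c v ∈ F v c)

open Finset Function

section Pigeonhole
variable {α β : Type*} [Fintype α] [DecidableEq β]

theorem Finset.eq_of_card_lt_card_filter_mem_add (g : α → Finset β) (hg : ∀ a, #(g a) ≤ 1)
    {t t' : β} (htt' : Fintype.card α < #{a | t ∈ g a} + #{a | t' ∈ g a}) : t = t' := by
  classical
  by_contra hne
  have hdisj : Disjoint (univ.filter (t ∈ g ·)) (univ.filter (t' ∈ g ·)) :=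
    disjoint_filter.mpr fun a _ ht ht' => hne (card_le_one.mp (hg a) t ht t' ht')
  have := card_le_univ (univ.filter (t ∈ g ·) ∪ univ.filter (t' ∈ g ·))
  rw [card_union_of_disjoint hdisj] at this
  omega

theorem Finset.exists_card_le_mul_card_filter_mem [Fintype β] [Nonempty β] (g : α → Finset β)
    (hg : ∀ a, (g a).Nonempty) : ∃ b, Fintype.card α ≤ Fintype.card β * #{a | b ∈ g a} := by
  classical
  by_contra! hlt
  have hcover : Fintype.card α ≤ ∑ b, #({a | b ∈ g a} : Finset α) := by
    refine le_trans (card_le_card fun a _ => ?_) card_biUnion_le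
    obtain ⟨b, hb⟩ := hg a
    exact mem_biUnion.mpr ⟨b, mem_univ b, mem_filter.mpr ⟨mem_univ a, hb⟩⟩
  have := sum_lt_sum_of_nonempty univ_nonempty fun b (_ : b ∈ univ) => hlt b
  rw [← mul_sum, sum_const, card_univ, smul_eq_mul] at this
  nlinarith
end Pigeonhole

namespace HatGame

variable {V : Type*}

abbrev Coloring (h : V → ℕ) := ∀ v, Fin (h v)

abbrev Strategy (h : V → ℕ) := ∀ v, Coloring h → Finset (Fin (h v))

structure IsWinningStrategy (D : V → V → Prop) (g h : V → ℕ) (F : Strategy h) : Prop where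
  eq_of_eqOn : ∀ v c c', (∀ x, D v x → c x = c' x) → F v c = F v c'
  card_eq : ∀ v c, #(F v c) = g v
  exists_mem : ∀ c, ∃ v, c v ∈ F v c

theorem winnable_iff {D : V → V → Prop} {g h : V → ℕ} :
    Winnable D g h ↔ ∃ F, IsWinningStrategy D g h F :=
  ⟨fun ⟨F, hview, hcard, hwin⟩ => ⟨F, hview, hcard, hwin⟩,
    fun ⟨F, hview, hcard, hwin⟩ => ⟨F, hview, hcard, hwin⟩⟩

theorem Winnable.of_subtype {D : V → V → Prop} {g h : V → ℕ} (hgh : ∀ v, g v ≤ h v)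
    (p : V → Prop) (hw : Winnable (fun a b : {w // p w} => D a b) (fun w => g w) (fun w => h w)) :
    Winnable D g h := by
  classical
  obtain ⟨F, hF⟩ := winnable_iff.mp hw
  refine ⟨fun v c => if hv : p v then F ⟨v, hv⟩ (fun w => c w)
      else univ.map (Fin.castLEEmb (hgh v)), ?_, ?_, ?_⟩
  · intro v c c' hcc'
    dsimp only
    split_ifs with hv
    · exact hF.eq_of_eqOn _ _ _ fun w hw => hcc' w hw
    · rfl
  · intro v c
    dsimp only
    split_ifs with hv
    · exact hF.card_eq _ _
    · simp
  · intro c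
    obtain ⟨w, hw⟩ := hF.exists_mem fun w => c w
    exact ⟨w, by simpa [dif_pos w.2] using hw⟩

theorem winnable_of_hatness_eq_one {D : V → V → Prop} {h : V → ℕ} (hpos : ∀ v, 0 < h v)
    {v₀ : V} (hv₀ : h v₀ = 1) : Winnable D (fun _ => 1) h :=
  ⟨fun v _ => {⟨0, hpos v⟩}, fun _ _ _ _ => rfl, fun _ _ => card_singleton _,
    fun c => ⟨v₀, mem_singleton.mpr (Fin.ext (by have := (c v₀).isLt; omega))⟩⟩

section Extend

variable [DecidableEq V] {h : V → ℕ} {ℓ : V} {h' : {w // w ≠ ℓ} → ℕ}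

def extendColoring (e : ∀ w, Fin (h' w) → Fin (h w)) (c' : Coloring h') (a : Fin (h ℓ)) :
    Coloring h :=
  fun x => if hx : x = ℓ then ⟨a, hx ▸ a.isLt⟩ else e ⟨x, hx⟩ (c' ⟨x, hx⟩)

variable {e : ∀ w, Fin (h' w) → Fin (h w)} {c' : Coloring h'} {a : Fin (h ℓ)}

@[simp]
theorem extendColoring_self : extendColoring e c' a ℓ = a := by
  simp [extendColoring]

@[simp]
theorem extendColoring_coe (w : {w // w ≠ ℓ}) : extendColoring e c' a w = e w (c' w) := by
  simp [extendColoring, w.2]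

theorem extendColoring_eq_of_eqOn {D : V → V → Prop} {v : V} {d' : Coloring h'}
    (hcd : ∀ w : {w // w ≠ ℓ}, D v w → c' w = d' w) (x : V) (hx : D v x) :
    extendColoring e c' a x = extendColoring e d' a x := by
  by_cases hxℓ : x = ℓ
  · subst hxℓ; simp
  · simp only [extendColoring, dif_neg hxℓ, hcd ⟨x, hxℓ⟩ hx]

end Extend

section LargeLeaf

variable [DecidableEq V] {D : V → V → Prop} {h : V → ℕ} {ℓ : V} {F : Strategy h}

def leafFiber (F : Strategy h) (ℓ v : V) (c' : Coloring fun w : {w // w ≠ ℓ} => h w)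
    (t : Fin (h v)) : Finset (Fin (h ℓ)) :=
  {a | t ∈ F v (extendColoring (fun _ => id) c' a)}

theorem IsWinningStrategy.apply_extendColoring_eq_of_not_adj {g : V → ℕ}
    (hF : IsWinningStrategy D g h F) {h' : {w // w ≠ ℓ} → ℕ} (e : ∀ w, Fin (h' w) → Fin (h w))
    {v : V} (hv : ¬ D v ℓ) (c' : Coloring h') (a b : Fin (h ℓ)) :
    F v (extendColoring e c' a) = F v (extendColoring e c' b) :=
  hF.eq_of_eqOn _ _ _ fun x hx => by
    have hxℓ : x ≠ ℓ := by rintro rfl; exact hv hx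
    simp only [extendColoring, dif_neg hxℓ]

theorem IsWinningStrategy.leafFiber_congr {g : V → ℕ} (hF : IsWinningStrategy D g h F) {v : V}
    {c' d' : Coloring fun w : {w // w ≠ ℓ} => h w} (hcd : ∀ w : {w // w ≠ ℓ}, D v w → c' w = d' w) :
    leafFiber F ℓ v c' = leafFiber F ℓ v d' := by
  ext t a
  simp only [leafFiber, mem_filter, mem_univ, true_and,
    hF.eq_of_eqOn v _ _ (extendColoring_eq_of_eqOn hcd)]

theorem IsWinningStrategy.leafFiber_eq_empty {g : V → ℕ} (hF : IsWinningStrategy D g h F)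
    {v : V} (hv : ¬ D v ℓ) {c' : Coloring fun w : {w // w ≠ ℓ} => h w} {t : Fin (h v)}
    (hlt : #(leafFiber F ℓ v c' t) < h ℓ) : leafFiber F ℓ v c' t = ∅ := by
  refine eq_empty_of_forall_notMem fun a ha => hlt.ne ?_
  have : leafFiber F ℓ v c' t = univ := eq_univ_of_forall fun b => by
    simpa [leafFiber, hF.apply_extendColoring_eq_of_not_adj _ hv c' b a] using ha
  rw [this, card_univ, Fintype.card_fin]

theorem IsWinningStrategy.eq_of_le_card_leafFiber (hF : IsWinningStrategy D (fun _ => 1) h F)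
    (hℓ : 3 ≤ h ℓ) {v : V} {c' : Coloring fun w : {w // w ≠ ℓ} => h w} {t t' : Fin (h v)}
    (ht : h ℓ - 1 ≤ #(leafFiber F ℓ v c' t)) (ht' : h ℓ - 1 ≤ #(leafFiber F ℓ v c' t')) :
    t = t' :=
  eq_of_card_lt_card_filter_mem_add (fun a => F v (extendColoring (fun _ => id) c' a))
    (fun _ => (hF.card_eq _ _).le) (by unfold leafFiber at ht ht'; rw [Fintype.card_fin]; omega)

def robustGuesses (F : Strategy h) (ℓ v : V) (c' : Coloring fun w : {w // w ≠ ℓ} => h w) :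
    Finset (Fin (h v)) :=
  {t | h ℓ - 1 ≤ #(leafFiber F ℓ v c' t)}

def eraseLeafStrategy (F : Strategy h) (ℓ : V) (a₀ : Fin (h ℓ)) :
    Strategy fun w : {w // w ≠ ℓ} => h w :=
  fun v c' => if #(robustGuesses F ℓ v c') = 1 then robustGuesses F ℓ v c'
    else F v (extendColoring (fun _ => id) c' a₀)

theorem winnable_subtype_of_three_le {u : V} (hℓu : ℓ ≠ u) (hin : ∀ w, D w ℓ → w = u)
    (hℓ : 3 ≤ h ℓ) (hw : Winnable D (fun _ => 1) h) :
    Winnable (fun a b : {w // w ≠ ℓ} => D a b) (fun _ => 1) (fun w => h w) := by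
  obtain ⟨F, hF⟩ := winnable_iff.mp hw
  let a₀ : Fin (h ℓ) := ⟨0, by omega⟩
  refine ⟨eraseLeafStrategy F ℓ a₀, fun v c' d' hcd => ?_, fun v c' => ?_, fun c' => ?_⟩
  · unfold eraseLeafStrategy robustGuesses
    rw [hF.leafFiber_congr hcd, hF.eq_of_eqOn v _ _ (extendColoring_eq_of_eqOn hcd)]
  · unfold eraseLeafStrategy
    split_ifs with h1
    exacts [h1, hF.card_eq _ _]
  by_contra! hlose
  have hsmall (v : {w // w ≠ ℓ}) : #(leafFiber F ℓ v c' (c' v)) < h ℓ - 1 := by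
    by_contra! hbig
    have hrobust : robustGuesses F ℓ v c' = {c' v} :=
      eq_singleton_iff_unique_mem.mpr ⟨mem_filter.mpr ⟨mem_univ _, hbig⟩,
        fun t ht => hF.eq_of_le_card_leafFiber hℓ (mem_filter.mp ht).2 hbig⟩
    have hguess : eraseLeafStrategy F ℓ a₀ v c' = {c' v} := by
      unfold eraseLeafStrategy
      rw [hrobust, if_pos (card_singleton _)]
    exact hlose v (hguess ▸ mem_singleton_self _)
  let u' : {w // w ≠ ℓ} := ⟨u, hℓu.symm⟩
  have hB : #(leafFiber F ℓ u c' (c' u') ∪ F ℓ (extendColoring (fun _ => id) c' a₀)) <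
      #(univ : Finset (Fin (h ℓ))) := by
    have hunion :=
      card_union_le (leafFiber F ℓ u c' (c' u')) (F ℓ (extendColoring (fun _ => id) c' a₀))
    have hfiber : #(leafFiber F ℓ u c' (c' u')) < h ℓ - 1 := hsmall u'
    rw [hF.card_eq] at hunion
    rw [card_univ, Fintype.card_fin]
    omega
  obtain ⟨a, -, ha⟩ := exists_mem_notMem_of_card_lt_card hB
  obtain ⟨x, hx⟩ := hF.exists_mem (extendColoring (fun _ => id) c' a)
  have hℓℓ : ¬ D ℓ ℓ := fun hℓℓ => hℓu (hin ℓ hℓℓ)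
  by_cases hxℓ : x = ℓ
  · subst hxℓ
    rw [extendColoring_self, hF.apply_extendColoring_eq_of_not_adj _ hℓℓ c' a a₀] at hx
    exact ha (mem_union_right _ hx)
  · lift x to {w // w ≠ ℓ} using hxℓ
    rw [extendColoring_coe] at hx
    have hx : a ∈ leafFiber F ℓ x c' (c' x) := mem_filter.mpr ⟨mem_univ _, hx⟩
    by_cases hxu : (x : V) = u
    · subst hxu
      exact ha (mem_union_left _ hx)
    · rw [hF.leafFiber_eq_empty (fun hD => hxu (hin x hD)) (by have := hsmall x; omega)] at hx
      exact notMem_empty a hx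

end LargeLeaf

section ReducedHatness

variable [DecidableEq V] {D : V → V → Prop} {h : V → ℕ} {ℓ : V}

def pullbackStrategy (F : Strategy h) {h' : {w // w ≠ ℓ} → ℕ} (hpos : ∀ w, 0 < h' w)
    (e : ∀ w, Fin (h' w) → Fin (h w)) (a : Fin (h ℓ)) : Strategy h' :=
  fun w c' =>
    if #({p | e w p ∈ F w (extendColoring e c' a)} : Finset _) = 1 then
      ({p | e w p ∈ F w (extendColoring e c' a)} : Finset _)
    else {⟨0, hpos w⟩}

theorem IsWinningStrategy.winnable_subtype_of_forall_notMem {F : Strategy h}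
    (hF : IsWinningStrategy D (fun _ => 1) h F) {h' : {w // w ≠ ℓ} → ℕ} (hpos : ∀ w, 0 < h' w)
    {e : ∀ w, Fin (h' w) → Fin (h w)} (he : ∀ w, Injective (e w)) {a : Fin (h ℓ)}
    (hℓ : ∀ c', a ∉ F ℓ (extendColoring e c' a)) :
    Winnable (fun x y : {w // w ≠ ℓ} => D x y) (fun _ => 1) h' := by
  refine ⟨pullbackStrategy F hpos e a, fun w c' d' hcd => ?_, fun w c' => ?_, fun c' => ?_⟩
  · simp only [pullbackStrategy, hF.eq_of_eqOn w _ _ (extendColoring_eq_of_eqOn hcd)]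
  · unfold pullbackStrategy
    split_ifs with h1
    exacts [h1, card_singleton _]
  obtain ⟨x, hx⟩ := hF.exists_mem (extendColoring e c' a)
  have hxℓ : x ≠ ℓ := by rintro rfl; exact hℓ c' (by simpa using hx)
  lift x to {w // w ≠ ℓ} using hxℓ
  rw [extendColoring_coe] at hx
  have hmem : c' x ∈ ({p | e x p ∈ F x (extendColoring e c' a)} : Finset _) :=
    mem_filter.mpr ⟨mem_univ _, hx⟩
  have hcard : #({p | e x p ∈ F x (extendColoring e c' a)} : Finset _) = 1 :=
    le_antisymm (card_le_one.mpr fun p hp q hq => he x <|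
      card_le_one.mp (hF.card_eq _ _).le _ (mem_filter.mp hp).2 _ (mem_filter.mp hq).2)
      (card_pos.mpr ⟨_, hmem⟩)
  exact ⟨x, by simpa only [pullbackStrategy, if_pos hcard] using hmem⟩

def reducedHatness (h : V → ℕ) (ℓ u : V) (m : ℕ) : {w // w ≠ ℓ} → ℕ :=
  fun w => if (w : V) = u then m else h w

theorem reducedHatness_pos {u : V} {m : ℕ} (hpos : ∀ v, 0 < h v) (hm : 0 < m)
    (w : {w // w ≠ ℓ}) : 0 < reducedHatness h ℓ u m w := by
  unfold reducedHatness
  split_ifs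
  exacts [hm, hpos w]

def reducedHatEmbedding {u : V} {m : ℕ} (σ : Fin m → Fin (h u)) (w : {w // w ≠ ℓ})
    (p : Fin (reducedHatness h ℓ u m w)) : Fin (h w) :=
  if hw : (w : V) = u then
    Fin.cast (congrArg h hw.symm) (σ (Fin.cast (by simp [reducedHatness, hw]) p))
  else Fin.cast (by simp [reducedHatness, hw]) p

theorem reducedHatEmbedding_injective {u : V} {m : ℕ} {σ : Fin m → Fin (h u)}
    (hσ : Injective σ) (w : {w // w ≠ ℓ}) : Injective (reducedHatEmbedding σ w) := by
  unfold reducedHatEmbedding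
  split_ifs
  exacts [(Fin.cast_injective _).comp (hσ.comp (Fin.cast_injective _)), Fin.cast_injective _]

theorem reducedHatEmbedding_mem_range {u : V} {m : ℕ} (σ : Fin m → Fin (h u)) (hℓu : ℓ ≠ u)
    (p : Fin (reducedHatness h ℓ u m ⟨u, hℓu.symm⟩)) :
    reducedHatEmbedding σ ⟨u, hℓu.symm⟩ p ∈ Set.range σ :=
  ⟨Fin.cast (by simp [reducedHatness]) p, by simp [reducedHatEmbedding]⟩

theorem winnable_reducedHatness_of_winnable {u : V} (hℓu : ℓ ≠ u) (hout : ∀ w, D ℓ w → w = u)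
    (hpos : ∀ v, 0 < h v) (hℓ : h ℓ = 2) (hw : Winnable D (fun _ => 1) h) :
    Winnable (fun a b : {w // w ≠ ℓ} => D a b) (fun _ => 1)
      (reducedHatness h ℓ u ((h u + 1) / 2)) := by
  obtain ⟨F, hF⟩ := winnable_iff.mp hw
  let c₀ : Coloring h := fun v => ⟨0, hpos v⟩
  have : Nonempty (Fin (h ℓ)) := Fin.pos_iff_nonempty.mp (hpos ℓ)
  obtain ⟨ε, hε⟩ := exists_card_le_mul_card_filter_mem (fun t : Fin (h u) => F ℓ (update c₀ u t))
    fun t => card_pos.mp (by rw [hF.card_eq]; omega)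
  set S : Finset (Fin (h u)) := {t | ε ∈ F ℓ (update c₀ u t)}
  have hS : h ℓ * #S = 2 * #S := by rw [hℓ]
  rw [Fintype.card_fin, Fintype.card_fin] at hε
  obtain ⟨T, hTS, hTcard⟩ := exists_subset_card_eq (show (h u + 1) / 2 ≤ #S by omega)
  let σ := T.orderEmbOfFin hTcard
  refine hF.winnable_subtype_of_forall_notMem (reducedHatness_pos hpos (by have := hpos u; omega))
    (reducedHatEmbedding_injective σ.injective) (a := ⟨1 - ε, by omega⟩) fun c' hmem => ?_
  obtain ⟨q, hq⟩ := reducedHatEmbedding_mem_range σ hℓu (c' ⟨u, hℓu.symm⟩)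
  have hguess : F ℓ (extendColoring (reducedHatEmbedding σ) c' ⟨1 - ε, by omega⟩) =
      F ℓ (update c₀ u (σ q)) := hF.eq_of_eqOn _ _ _ fun x hx => by
    obtain rfl := hout x hx
    rw [update_self, hq]
    exact extendColoring_coe ⟨x, hℓu.symm⟩
  have hε_mem : ε ∈ F ℓ (update c₀ u (σ q)) := (mem_filter.mp (hTS (T.orderEmbOfFin_mem _ q))).2
  rw [hguess] at hmem
  have := congrArg Fin.val (card_le_one.mp (hF.card_eq _ _).le _ hmem _ hε_mem)
  simp only at this
  omega

end ReducedHatness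

section Doubling

variable [DecidableEq V] {D : V → V → Prop} {h : V → ℕ} {ℓ u : V}

def halveColoring (ℓ u : V) (c : Coloring h) : Coloring (reducedHatness h ℓ u ((h u + 1) / 2)) :=
  fun w => ⟨if (w : V) = u then c u / 2 else c w, by
    unfold reducedHatness
    split_ifs
    exacts [by have := (c u).isLt; omega, (c w).isLt]⟩

/-- The `min` only acts when `2 * q + 1 = h u`, a hat `u` cannot wear. -/
def unhalveHat {m : ℕ} (c : Coloring h) (w : {w // w ≠ ℓ})
    (q : Fin (reducedHatness h ℓ u m w)) : Fin (h w) :=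
  ⟨if (w : V) = u then min (2 * q + (1 - c ℓ)) (h u - 1) else q, by
    have hq := q.isLt
    unfold reducedHatness at hq
    split_ifs at hq ⊢ with hw
    · have := (c u).isLt
      have : h w = h u := congrArg h hw
      omega
    · exact hq⟩

def doublingStrategy (hℓ : h ℓ = 2)
    (F' : Strategy (reducedHatness h ℓ u ((h u + 1) / 2))) : Strategy h :=
  fun v c => if hv : v = ℓ then {⟨c u % 2, by rw [hv, hℓ]; omega⟩}
    else (F' ⟨v, hv⟩ (halveColoring ℓ u c)).image (unhalveHat c ⟨v, hv⟩)

theorem halveColoring_eq_of_eqOn {v : V} {c d : Coloring h} (hcd : ∀ x, D v x → c x = d x)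
    (w : {w // w ≠ ℓ}) (hw : D v w) : halveColoring ℓ u c w = halveColoring ℓ u d w := by
  ext
  simp only [halveColoring]
  split_ifs with hwu
  · rw [hcd u (hwu ▸ hw)]
  · rw [hcd w hw]

theorem unhalveHat_eq_of_eqOn {m : ℕ} (hDuℓ : D u ℓ) {w : {w // w ≠ ℓ}} {c d : Coloring h}
    (hcd : ∀ x, D w x → c x = d x) : unhalveHat (u := u) (m := m) c w = unhalveHat d w := by
  funext q
  ext
  simp only [unhalveHat]
  split_ifs with hwu
  · rw [hcd ℓ (hwu ▸ hDuℓ)]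
  · rfl

theorem unhalveHat_halveColoring (hℓ : h ℓ = 2) (c : Coloring h) (w : {w // w ≠ ℓ})
    (hw : (w : V) = u → (c u : ℕ) % 2 ≠ c ℓ) : unhalveHat c w (halveColoring ℓ u c w) = c w := by
  ext
  simp only [unhalveHat, halveColoring]
  split_ifs with hwu
  · have hu := (c u).isLt
    have hℓ2 := (c ℓ).isLt
    have := hw hwu
    subst hwu
    omega
  · rfl

theorem winnable_of_winnable_reducedHatness (hDℓu : D ℓ u) (hDuℓ : D u ℓ) (hℓ : h ℓ = 2)
    (hw : Winnable (fun a b : {w // w ≠ ℓ} => D a b) (fun _ => 1)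
      (reducedHatness h ℓ u ((h u + 1) / 2))) :
    Winnable D (fun _ => 1) h := by
  obtain ⟨F', hF'⟩ := winnable_iff.mp hw
  refine ⟨doublingStrategy hℓ F', fun v c d hcd => ?_, fun v c => ?_, fun c => ?_⟩
  · unfold doublingStrategy
    split_ifs with hv
    · subst hv; simp only [hcd u hDℓu]
    · rw [hF'.eq_of_eqOn _ _ _ (halveColoring_eq_of_eqOn hcd),
        unhalveHat_eq_of_eqOn (w := ⟨v, hv⟩) hDuℓ hcd]
  · unfold doublingStrategy
    split_ifs with hv
    · exact card_singleton _
    · obtain ⟨q, hq⟩ := card_eq_one.mp (hF'.card_eq ⟨v, hv⟩ (halveColoring ℓ u c))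
      rw [hq, image_singleton, card_singleton]
  obtain ⟨w, hw⟩ := hF'.exists_mem (halveColoring ℓ u c)
  by_cases hℓwin : (w : V) = u ∧ (c u : ℕ) % 2 = c ℓ
  · refine ⟨ℓ, ?_⟩
    simp [doublingStrategy, hℓwin.2]
  · refine ⟨w, ?_⟩
    simp only [doublingStrategy, dif_neg w.2]
    rw [← unhalveHat_halveColoring hℓ c w fun hwu => not_and.mp hℓwin hwu]
    exact mem_image_of_mem _ hw

end Doubling

end HatGame

theorem latvian_leaf_rules {V : Type*} [DecidableEq V]
    (D : V → V → Prop)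
    (h : V → ℕ) (hh : ∀ v, 2 ≤ h v)
    (ℓ u : V) (hℓu : ℓ ≠ u)
    (hout : ∀ w : V, D ℓ w ↔ w = u)
    (hin : ∀ w : V, D w ℓ ↔ w = u) :
    ((3 ≤ h ℓ →
        (HatGame.Winnable (fun a b : {w : V // w ≠ ℓ} => D a b)
            (fun _ => 1) (fun w => h w) ↔
          HatGame.Winnable D (fun _ => 1) h)) ∧
     (h ℓ = 2 → h u = 2 → HatGame.Winnable D (fun _ => 1) h) ∧
     (h ℓ = 2 → 3 ≤ h u →
        (HatGame.Winnable D (fun _ => 1) h ↔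
          HatGame.Winnable (fun a b : {w : V // w ≠ ℓ} => D a b)
            (fun _ => 1)
            (fun w => if (w : V) = u then (h u + 1) / 2 else h w)))) := by
  have hpos v : 0 < h v := by have := hh v; omega
  have hDℓu : D ℓ u := (hout u).2 rfl
  have hDuℓ : D u ℓ := (hin u).2 rfl
  refine ⟨fun hℓ => ⟨HatGame.Winnable.of_subtype hpos _,
      HatGame.winnable_subtype_of_three_le hℓu (fun w => (hin w).1) hℓ⟩,
    fun hℓ hu => HatGame.winnable_of_winnable_reducedHatness hDℓu hDuℓ hℓ ?_,
    fun hℓ _ => ⟨HatGame.winnable_reducedHatness_of_winnable hℓu (fun w => (hout w).1) hpos hℓ,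
      HatGame.winnable_of_winnable_reducedHatness hDℓu hDuℓ hℓ⟩⟩
  exact HatGame.winnable_of_hatness_eq_one (HatGame.reducedHatness_pos hpos (by omega))
    (v₀ := ⟨u, hℓu.symm⟩) (by simp [HatGame.reducedHatness, hu])
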